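/- The function a(t) = 2(I₀(t) − 1)/t² is strictly monotone increasing on (0, ∞). -/
import Mathlib


open Real Filter

/-- The modified Bessel function of the first kind of order zero,
`I₀(t) = ∑ₖ (t²/4)^k / (k!)²`. -/
noncomputable def besselI0 (t : ℝ) : ℝ := ∑' k : ℕ, (t ^ 2 / 4) ^ k / (Nat.factorial k : ℝ) ^ 2

/-- The coefficient `a(t) = 2(I₀(t) - 1)/t²`. -/
noncomputable def aCoeff (t : ℝ) : ℝ := 2 * (besselI0 t - 1) / t ^ 2

lemma summable_bessel (t : ℝ) :
    Summable (fun k : ℕ => (t ^ 2 / 4) ^ k / (Nat.factorial k : ℝ) ^ 2) := by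
  have hle : ∀ k : ℕ, (t ^ 2 / 4) ^ k / (Nat.factorial k : ℝ) ^ 2
      ≤ (t ^ 2 / 4) ^ k / (Nat.factorial k : ℝ) := by
    intro k
    apply div_le_div_of_nonneg_left (by positivity) (by positivity)
    have h1 : (1 : ℝ) ≤ (Nat.factorial k : ℝ) := by
      exact_mod_cast Nat.one_le_iff_ne_zero.mpr (Nat.factorial_ne_zero k)
    nlinarith
  exact (Real.summable_pow_div_factorial (t ^ 2 / 4)).of_nonneg_of_le
    (fun k => by positivity) hle

lemma summable_g (t : ℝ) :
    Summable (fun k : ℕ => (t ^ 2 / 4) ^ k / (2 * (Nat.factorial (k + 1) : ℝ) ^ 2)) := by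
  have hle : ∀ k : ℕ, (t ^ 2 / 4) ^ k / (2 * (Nat.factorial (k + 1) : ℝ) ^ 2)
      ≤ (t ^ 2 / 4) ^ k / (Nat.factorial k : ℝ) := by
    intro k
    apply div_le_div_of_nonneg_left (by positivity) (by positivity)
    have h1 : (Nat.factorial k : ℝ) ≤ (Nat.factorial (k + 1) : ℝ) := by
      exact_mod_cast Nat.factorial_le (Nat.le_succ k)
    have h2 : (1 : ℝ) ≤ (Nat.factorial k : ℝ) := by
      exact_mod_cast Nat.one_le_iff_ne_zero.mpr (Nat.factorial_ne_zero k)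
    nlinarith
  exact (Real.summable_pow_div_factorial (t ^ 2 / 4)).of_nonneg_of_le
    (fun k => by positivity) hle

lemma aCoeff_eq (t : ℝ) (ht : t ≠ 0) :
    aCoeff t = ∑' k : ℕ, (t ^ 2 / 4) ^ k / (2 * (Nat.factorial (k + 1) : ℝ) ^ 2) := by
  have hs := summable_bessel t
  have h0 : besselI0 t = 1 + ∑' k : ℕ,
      (t ^ 2 / 4) ^ (k + 1) / (Nat.factorial (k + 1) : ℝ) ^ 2 := by
    rw [besselI0, Summable.tsum_eq_zero_add hs]
    norm_num
  have key : ∀ k : ℕ, (t ^ 2 / 4) ^ k / (2 * (Nat.factorial (k + 1) : ℝ) ^ 2)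
      = 2 / t ^ 2 * ((t ^ 2 / 4) ^ (k + 1) / (Nat.factorial (k + 1) : ℝ) ^ 2) := by
    intro k
    have h2 : (Nat.factorial (k + 1) : ℝ) ≠ 0 := by
      exact_mod_cast Nat.factorial_ne_zero (k + 1)
    rw [pow_succ]
    field_simp
    ring
  calc aCoeff t = 2 / t ^ 2 * ∑' k : ℕ,
        (t ^ 2 / 4) ^ (k + 1) / (Nat.factorial (k + 1) : ℝ) ^ 2 := by
        rw [aCoeff, h0]; ring
    _ = ∑' k : ℕ, 2 / t ^ 2 * ((t ^ 2 / 4) ^ (k + 1) / (Nat.factorial (k + 1) : ℝ) ^ 2) := by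
        rw [tsum_mul_left]
    _ = ∑' k : ℕ, (t ^ 2 / 4) ^ k / (2 * (Nat.factorial (k + 1) : ℝ) ^ 2) := by
        exact tsum_congr fun k => (key k).symm

theorem stmt_9 : StrictMonoOn aCoeff (Set.Ioi (0 : ℝ)) := by
  intro x hx y hy hxy
  simp only [Set.mem_Ioi] at hx hy
  rw [aCoeff_eq x (ne_of_gt hx), aCoeff_eq y (ne_of_gt hy)]
  have hx2 : x ^ 2 / 4 < y ^ 2 / 4 := by nlinarith
  apply Summable.tsum_lt_tsum (i := 1) ?_ ?_ (summable_g x) (summable_g y)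
  · intro k
    have hc : (0 : ℝ) < 2 * (Nat.factorial (k + 1) : ℝ) ^ 2 := by positivity
    exact (div_le_div_iff_of_pos_right hc).mpr (pow_le_pow_left₀ (by positivity) hx2.le k)
  · have hc : (0 : ℝ) < 2 * (Nat.factorial (1 + 1) : ℝ) ^ 2 := by positivity
    exact (div_lt_div_iff_of_pos_right hc).mpr (pow_lt_pow_left₀ hx2 (by positivity) one_ne_zero)
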